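/- Let e = φ(u,u) ∈ sl(U) (so e(v) = u and e(u) = 0 in the symplectic basis u, v with λ(u,v) = 1), and let D be the adjoint operator x ↦ [e ⊗ e_0, x] on the Frank algebra F(n). Then D³ = 0 as a linear endomorphism of F(n); hence, by the correspondence between 3-nilpotent operators and α_3-coactions, D equips F(n) with the structure of an algebra in Rep(α_3). -/
import Mathlib


/-- The product of the divided power algebra `O(1;n)`, written in coordinates with
respect to the basis `e_0, …, e_{3^n - 1}`: it is the bilinear product determined by
`e_i · e_j = binom(i+j, i) e_{i+j}`, where `e_k = 0` for `k ≥ 3^n`. -/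
def omul (Φ : Type*) [Field Φ] (n : ℕ) (f g : Fin (3 ^ n) → Φ) : Fin (3 ^ n) → Φ :=
  fun k => ∑ i : Fin (3 ^ n), ∑ j : Fin (3 ^ n),
    if (i : ℕ) + (j : ℕ) = (k : ℕ)
    then (((i : ℕ) + (j : ℕ)).choose (i : ℕ) : Φ) * f i * g j
    else 0

/-- The basis element `e_i` of `O(1;n)`. -/
def eb (Φ : Type*) [Field Φ] (n : ℕ) (i : Fin (3 ^ n)) : Fin (3 ^ n) → Φ :=
  Pi.single i 1

/-- The linear map `∂` on `O(1;n)`, with `∂ e_0 = 0` and `∂ e_i = e_{i-1}`;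
in coordinates, `(∂ f)_k = f_{k+1}` (interpreted as `0` when `k + 1 ≥ 3^n`). -/
def odel (Φ : Type*) [Field Φ] (n : ℕ) (f : Fin (3 ^ n) → Φ) : Fin (3 ^ n) → Φ :=
  fun k => if h : (k : ℕ) + 1 < 3 ^ n then f ⟨(k : ℕ) + 1, h⟩ else 0

/-- The triple product `L_{f,g}h = f·g·∂(h) − h·g·∂(f)` on `O(1;n)`. -/
def Lt (Φ : Type*) [Field Φ] (n : ℕ) (f g h : Fin (3 ^ n) → Φ) : Fin (3 ^ n) → Φ :=
  omul Φ n (omul Φ n f g) (odel Φ n h) - omul Φ n (omul Φ n h g) (odel Φ n f)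

/-- The Frank algebra `F(n) = (U ⊗ O) ⊕ (sl(U) ⊗ O) ⊕ (Φ·Id_U ⊗ O)` in coordinates:
an element is `u⊗p + v⊗q + H⊗a + E⊗b + F⊗c + Id⊗w`, where `u, v` is the symplectic
basis of `U` (`λ(u,v) = 1`) and `H = diag(1,−1)`, `E` (`Ev = u, Eu = 0`),
`F` (`Fu = v, Fv = 0`) is the standard basis of `sl(U)` in the basis `u, v`. -/
structure Frank (Φ : Type*) [Field Φ] (n : ℕ) where
  p : Fin (3 ^ n) → Φ
  q : Fin (3 ^ n) → Φ
  a : Fin (3 ^ n) → Φ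
  b : Fin (3 ^ n) → Φ
  c : Fin (3 ^ n) → Φ
  w : Fin (3 ^ n) → Φ

/-- The bracket of the Frank algebra `F(n)`, obtained by bilinear extension of the
rules `[Id⊗f, Id⊗g] = Id⊗(f∂g − g∂f)`; `[Id⊗f, A⊗g] = A⊗(f∂g)` for `A ∈ sl(U)`;
`[A⊗f, B⊗g] = [A,B]⊗(fg)`; `[Id⊗f, w⊗g] = w⊗(f∂g + ∂(f)g)` for `w ∈ U`;
`[A⊗f, w⊗g] = A(w)⊗(fg)`; and
`[w⊗f, w'⊗g] = φ(w,w')⊗(f∂g − g∂f) + λ(w,w')·Id⊗(fg)`, where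
`φ(w,w')(w'') = λ(w,w'')w' + λ(w',w'')w` (so `φ(u,u) = 2E`, `φ(u,v) = −H`,
`φ(v,v) = −2F`), written out in the coordinates of `Frank`. -/
def fbra (Φ : Type*) [Field Φ] (n : ℕ) (X Y : Frank Φ n) : Frank Φ n where
  p := omul Φ n X.w (odel Φ n Y.p) - omul Φ n Y.w (odel Φ n X.p)
      + omul Φ n (odel Φ n X.w) Y.p - omul Φ n (odel Φ n Y.w) X.p
      + omul Φ n X.a Y.p - omul Φ n Y.a X.p
      + omul Φ n X.b Y.q - omul Φ n Y.b X.q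
  q := omul Φ n X.w (odel Φ n Y.q) - omul Φ n Y.w (odel Φ n X.q)
      + omul Φ n (odel Φ n X.w) Y.q - omul Φ n (odel Φ n Y.w) X.q
      - omul Φ n X.a Y.q + omul Φ n Y.a X.q
      + omul Φ n X.c Y.p - omul Φ n Y.c X.p
  a := omul Φ n X.w (odel Φ n Y.a) - omul Φ n Y.w (odel Φ n X.a)
      + omul Φ n X.b Y.c - omul Φ n X.c Y.b
      - (omul Φ n X.p (odel Φ n Y.q) - omul Φ n Y.q (odel Φ n X.p))
      - (omul Φ n X.q (odel Φ n Y.p) - omul Φ n Y.p (odel Φ n X.q))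
  b := omul Φ n X.w (odel Φ n Y.b) - omul Φ n Y.w (odel Φ n X.b)
      + (2 : Φ) • (omul Φ n X.a Y.b - omul Φ n X.b Y.a)
      + (2 : Φ) • (omul Φ n X.p (odel Φ n Y.p) - omul Φ n Y.p (odel Φ n X.p))
  c := omul Φ n X.w (odel Φ n Y.c) - omul Φ n Y.w (odel Φ n X.c)
      + (2 : Φ) • (omul Φ n X.c Y.a - omul Φ n X.a Y.c)
      - (2 : Φ) • (omul Φ n X.q (odel Φ n Y.q) - omul Φ n Y.q (odel Φ n X.q))
  w := omul Φ n X.w (odel Φ n Y.w) - omul Φ n Y.w (odel Φ n X.w)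
      + omul Φ n X.p Y.q - omul Φ n X.q Y.p

/-- The element `u ⊗ f` of the Frank algebra. -/
def uT (Φ : Type*) [Field Φ] (n : ℕ) (f : Fin (3 ^ n) → Φ) : Frank Φ n :=
  ⟨f, 0, 0, 0, 0, 0⟩

/-- The element `v ⊗ g` of the Frank algebra. -/
def vT (Φ : Type*) [Field Φ] (n : ℕ) (g : Fin (3 ^ n) → Φ) : Frank Φ n :=
  ⟨0, g, 0, 0, 0, 0⟩

/-- The element `e ⊗ e_0` of the Frank algebra, where `e = φ(u,u) = 2E ∈ sl(U)`. -/
def eEl (Φ : Type*) [Field Φ] (n : ℕ) : Frank Φ n :=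
  ⟨0, 0, 0, (2 : Φ) • eb Φ n ⟨0, by positivity⟩, 0, 0⟩


section Aux
variable (Φ : Type*) [Field Φ] (n : ℕ)

lemma omul_zero_left (g : Fin (3^n) → Φ) : omul Φ n 0 g = 0 := by
  funext k; simp [omul]

lemma omul_zero_right (f : Fin (3^n) → Φ) : omul Φ n f 0 = 0 := by
  funext k; simp [omul]

lemma odel_zero : odel Φ n 0 = 0 := by
  funext k; simp [odel]

lemma odel_smul_eb0 (c : Φ) (h : 0 < 3^n) : odel Φ n (c • eb Φ n ⟨0, h⟩) = 0 := by
  funext k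
  simp only [odel, eb, Pi.smul_apply, Pi.single_apply, Pi.zero_apply]
  split
  · rw [if_neg]
    · simp
    · intro hEq
      have := congrArg Fin.val hEq
      simp at this
  · rfl

lemma omul_smul_eb0_left (c : Φ) (h : 0 < 3^n) (g : Fin (3^n) → Φ) :
    omul Φ n (c • eb Φ n ⟨0, h⟩) g = c • g := by
  funext k
  simp only [omul, eb, Pi.smul_apply, Pi.single_apply, smul_eq_mul]
  rw [Finset.sum_eq_single (⟨0, h⟩ : Fin (3^n))]
  · rw [Finset.sum_eq_single k]
    · simp
    · intro j _ hj
      refine if_neg fun hc => hj (Fin.ext ?_)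
      simpa using hc
    · simp
  · intro i _ hi
    apply Finset.sum_eq_zero
    intro j _
    have : (if i = (⟨0, h⟩ : Fin (3^n)) then (1:Φ) else 0) = 0 := if_neg hi
    rw [this]
    simp
  · simp

lemma fbra_eEl (Y : Frank Φ n) :
    fbra Φ n (eEl Φ n) Y =
      ⟨(2:Φ) • Y.q, 0, (2:Φ) • Y.c, -((4:Φ) • Y.a), 0, 0⟩ := by
  have h : 0 < 3^n := by positivity
  simp only [fbra, eEl, Frank.mk.injEq]
  refine ⟨?_, ?_, ?_, ?_, ?_, ?_⟩ <;>
  · simp only [omul_zero_left, omul_zero_right, odel_zero,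
      odel_smul_eb0, omul_smul_eb0_left]
    module

theorem frank_D3 (Y : Frank Φ n) :
    fbra Φ n (eEl Φ n) (fbra Φ n (eEl Φ n) (fbra Φ n (eEl Φ n) Y)) =
      ⟨0, 0, 0, 0, 0, 0⟩ := by
  simp only [fbra_eEl]
  simp

end Aux

/-- With `e = φ(u,u) ∈ sl(U)` and `D = ad(e ⊗ e_0)` on the Frank algebra `F(n)`, we
have `D³ = 0`; hence `D` equips `F(n)` with the structure of an algebra in
`Rep(α₃)`. -/
theorem frank_ad_cube_zero (Φ : Type*) [Field Φ] [CharP Φ 3] (n : ℕ) (hn : 1 ≤ n)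
    (X : Frank Φ n) :
    fbra Φ n (eEl Φ n) (fbra Φ n (eEl Φ n) (fbra Φ n (eEl Φ n) X)) =
      ⟨0, 0, 0, 0, 0, 0⟩ := by
  exact frank_D3 Φ n X
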